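/- If G is a disconnected d-distinguishing critical graph with no isolated vertex, then the complement of G is a connected 2-self-centered graph (every vertex of the complement has eccentricity exactly 2). -/

import Mathlib

/-! Vertices in different components of `G` are adjacent in `Gᶜ`. If `G` is disconnected, two vertices
in different components are thus `Gᶜ`-adjacent, and two vertices in the same component are joined in
`Gᶜ` through any vertex outside it; so `Gᶜ` is connected with diameter at most 2. A `G`-neighbour of
`v` is not `Gᶜ`-adjacent to `v`, hence at distance exactly 2. -/

/-- A labeling with `r` labels is distinguishing if the only automorphism
preserving all labels is the identity. -/
def IsDistinguishing {V : Type*} (G : SimpleGraph V) (r : ℕ) (f : V → Fin r) : Prop :=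
  ∀ φ : G ≃g G, (∀ v, f (φ v) = f v) → ∀ v, φ v = v

/-- The distinguishing number of a graph. -/
noncomputable def distNum {V : Type*} (G : SimpleGraph V) : ℕ :=
  sInf {r : ℕ | ∃ f : V → Fin r, IsDistinguishing G r f}

/-- A graph is `d`-distinguishing critical if its distinguishing number is `d`
and no proper induced subgraph has distinguishing number `d`. -/
def DistCritical {V : Type*} (G : SimpleGraph V) (d : ℕ) : Prop :=
  distNum G = d ∧ ∀ s : Set V, s ≠ Set.univ → distNum (G.induce s) ≠ d

/-- The disjoint union of `c` copies of a graph `H`. -/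
def copies {W : Type*} (c : ℕ) (H : SimpleGraph W) : SimpleGraph (Fin c × W) where
  Adj a b := a.1 = b.1 ∧ H.Adj a.2 b.2
  symm := ⟨fun a b h => ⟨h.1.symm, H.symm.symm _ _ h.2⟩⟩
  loopless := ⟨fun a h => H.loopless.irrefl a.2 h.2⟩

/-- `numDistLab G k` is the number of inequivalent `k`-distinguishing labelings of `G`,
two labelings being equivalent when some automorphism of `G` maps one to the other. -/
noncomputable def numDistLab {V : Type*} (G : SimpleGraph V) (k : ℕ) : ℕ :=
  Nat.card (Quot (fun f g : {f : V → Fin k // IsDistinguishing G k f} =>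
    ∃ φ : G ≃g G, ∀ v, f.1 (φ v) = g.1 v))

namespace SimpleGraph

variable {V : Type*} {G : SimpleGraph V}

lemma exists_not_reachable_of_not_preconnected (h : ¬G.Preconnected) (u : V) :
    ∃ w, ¬G.Reachable u w := by
  obtain ⟨a, b, hab⟩ : ∃ a b, ¬G.Reachable a b := by
    simpa only [Preconnected, not_forall] using h
  by_cases hua : G.Reachable u a
  · exact ⟨b, fun hub => hab (hua.symm.trans hub)⟩
  · exact ⟨a, hua⟩

lemma edist_compl_le_two_of_not_preconnected (h : ¬G.Preconnected) (u v : V) :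
    Gᶜ.edist u v ≤ 2 := by
  rcases G.reachable_or_compl_adj u v with huv | huv
  · obtain ⟨w, huw⟩ := exists_not_reachable_of_not_preconnected h u
    have hvw : ¬G.Reachable v w := fun hvw => huw (huv.trans hvw)
    have hw₁ := (G.reachable_or_compl_adj u w).resolve_left huw
    have hw₂ := (G.reachable_or_compl_adj v w).resolve_left hvw
    calc Gᶜ.edist u v ≤ Gᶜ.edist u w + Gᶜ.edist w v := Gᶜ.edist_triangle
      _ = 2 := by
        rw [edist_eq_one_iff_adj.mpr hw₁, edist_eq_one_iff_adj.mpr hw₂.symm, one_add_one_eq_two]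
  · rw [edist_eq_one_iff_adj.mpr huv]
    norm_num

lemma connected_compl_of_not_preconnected (h : ¬G.Preconnected) : Gᶜ.Connected := by
  have : Nonempty V := by
    by_contra hV
    exact h fun u => (hV ⟨u⟩).elim
  exact G.connected_or_connected_compl.resolve_left fun hG => h hG.preconnected

lemma dist_compl_le_two_of_not_preconnected (h : ¬G.Preconnected) (u v : V) :
    Gᶜ.dist u v ≤ 2 := by
  have huv : (Gᶜ.dist u v : ℕ∞) ≤ 2 := by
    rw [(connected_compl_of_not_preconnected h u v).coe_dist_eq_edist]
    exact edist_compl_le_two_of_not_preconnected h u v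
  exact_mod_cast huv

lemma Adj.dist_compl_eq_two_of_not_preconnected (h : ¬G.Preconnected) {u v : V}
    (hadj : G.Adj u v) : Gᶜ.dist u v = 2 := by
  have hnadj : ¬Gᶜ.Adj u v := fun hc => ((G.compl_adj u v).mp hc).2 hadj
  have hgt : 1 < Gᶜ.dist u v :=
    (connected_compl_of_not_preconnected h).one_lt_dist_of_ne_of_not_adj hadj.ne hnadj
  have hle : Gᶜ.dist u v ≤ 2 := dist_compl_le_two_of_not_preconnected h u v
  omega

end SimpleGraph

theorem stmt10_general {V : Type*} (G : SimpleGraph V)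
    (hdisc : ¬ G.Preconnected)
    (hiso : ∀ v : V, ∃ w, G.Adj v w) :
    Gᶜ.Connected ∧ ∀ v : V, (∀ w, Gᶜ.dist v w ≤ 2) ∧ ∃ w, Gᶜ.dist v w = 2 := by
  refine ⟨SimpleGraph.connected_compl_of_not_preconnected hdisc, fun v =>
    ⟨SimpleGraph.dist_compl_le_two_of_not_preconnected hdisc v, ?_⟩⟩
  obtain ⟨w, hvw⟩ := hiso v
  exact ⟨w, hvw.dist_compl_eq_two_of_not_preconnected hdisc⟩

theorem stmt10 {V : Type*} [Fintype V] (G : SimpleGraph V) (d : ℕ)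
    (hdisc : ¬ G.Preconnected) (hcrit : DistCritical G d)
    (hiso : ∀ v : V, ∃ w, G.Adj v w) :
    Gᶜ.Connected ∧ ∀ v : V, (∀ w, Gᶜ.dist v w ≤ 2) ∧ ∃ w, Gᶜ.dist v w = 2 :=
  stmt10_general G hdisc hiso
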